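/- arXiv:2512.09161 — 6 statements merged into one kernel-verified Lean document; each statement's English description precedes it below -/
import Mathlib

section
/- Let $0<p_1\le p_2\le\cdots\le p_n<1$ and $k\in\{1,\dots,n\}$. Define $r^\ast$ to be the largest $r\in\{1,\dots,k-1\}$ such that $p_{n-r+1}\geq \frac{1}{k-r+1}\sum_{i=1}^{n-r+1}p_i$, or $r^\ast=0$ if no such $r$ exists. Then for every probability space and events $A_1,\dots,A_n$ with $\mathbb{P}(A_i)=p_i$, the probability that at least $k$ of the $A_i$ occur is at most $\min\{\frac{1}{k-r^\ast}\sum_{i=1}^{n-r^\ast}p_i,\,1\}$. -/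
open MeasureTheory Finset
open scoped Classical ENNReal

theorem stmt_2 {Ω : Type*} [MeasurableSpace Ω] (μ : Measure Ω) [IsProbabilityMeasure μ]
    (n : ℕ) (p : ℕ → ℝ)
    (hp0 : ∀ i ∈ Finset.Icc 1 n, 0 < p i) (hp1 : ∀ i ∈ Finset.Icc 1 n, p i < 1)
    (hmono : ∀ i, 1 ≤ i → i < n → p i ≤ p (i + 1))
    (k : ℕ) (hk1 : 1 ≤ k) (hkn : k ≤ n)
    (rs : ℕ)
    (hrs : rs = 0 ∨ (1 ≤ rs ∧ rs ≤ k - 1 ∧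
      p (n - rs + 1) ≥ (∑ i ∈ Finset.Icc 1 (n - rs + 1), p i) / (k - rs + 1)))
    (hrsmax : ∀ r, 1 ≤ r → r ≤ k - 1 →
      p (n - r + 1) ≥ (∑ i ∈ Finset.Icc 1 (n - r + 1), p i) / (k - r + 1) → r ≤ rs)
    (A : ℕ → Set Ω) (hA : ∀ i ∈ Finset.Icc 1 n, MeasurableSet (A i))
    (hPA : ∀ i ∈ Finset.Icc 1 n, (μ (A i)).toReal = p i) :
    (μ {ω | k ≤ ((Finset.Icc 1 n).filter (fun i => ω ∈ A i)).card}).toReal ≤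
      min ((∑ i ∈ Finset.Icc 1 (n - rs), p i) / (k - rs)) 1 := by
  have hrsk : rs + 1 ≤ k := by
    rcases hrs with h | ⟨h1, h2, _⟩ <;> omega
  set m := n - rs with hm
  set j := k - rs with hj
  have hj1 : 1 ≤ j := by omega
  have hAmeas : ∀ i ∈ Finset.Icc 1 m, MeasurableSet (A i) := by
    intro i hi
    apply hA
    simp only [Finset.mem_Icc] at hi ⊢
    omega
  set E : Set Ω := {ω | k ≤ ((Finset.Icc 1 n).filter (fun i => ω ∈ A i)).card} with hE
  set F : Set Ω := {ω | j ≤ ((Finset.Icc 1 m).filter (fun i => ω ∈ A i)).card} with hF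
  have hEF : E ⊆ F := by
    intro ω hω
    simp only [hE, hF, Set.mem_setOf_eq] at hω ⊢
    have hsub : (Finset.Icc 1 n).filter (fun i => ω ∈ A i) ⊆
        ((Finset.Icc 1 m).filter (fun i => ω ∈ A i)) ∪ Finset.Icc (m + 1) n := by
      intro i hi
      simp only [Finset.mem_filter, Finset.mem_Icc, Finset.mem_union] at hi ⊢
      by_cases h : i ≤ m
      · exact Or.inl ⟨⟨hi.1.1, h⟩, hi.2⟩
      · exact Or.inr ⟨by omega, hi.1.2⟩
    have h2 := (Finset.card_le_card hsub).trans (Finset.card_union_le _ _)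
    have hcard : (Finset.Icc (m + 1) n).card = rs := by
      rw [Nat.card_Icc]; omega
    omega
  set f : Ω → ℝ≥0∞ := fun ω => ∑ i ∈ Finset.Icc 1 m, (A i).indicator 1 ω with hfdef
  have hfm : ∀ i ∈ Finset.Icc 1 m, Measurable ((A i).indicator (1 : Ω → ℝ≥0∞)) :=
    fun i hi => measurable_const.indicator (hAmeas i hi)
  have hfmeas : Measurable f := Finset.measurable_sum _ hfm
  have hfint : ∫⁻ ω, f ω ∂μ = ∑ i ∈ Finset.Icc 1 m, μ (A i) := by
    rw [lintegral_finset_sum _ hfm]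
    exact Finset.sum_congr rfl fun i hi => lintegral_indicator_one (hAmeas i hi)
  have hfF : ∀ ω ∈ F, (j : ℝ≥0∞) ≤ f ω := by
    intro ω hω
    simp only [hF, Set.mem_setOf_eq] at hω
    have hfeq : f ω = (((Finset.Icc 1 m).filter (fun i => ω ∈ A i)).card : ℝ≥0∞) := by
      rw [Finset.card_filter]
      push_cast
      refine Finset.sum_congr rfl fun i hi => ?_
      by_cases h : ω ∈ A i <;> simp [Set.indicator_apply, h]
    rw [hfeq]
    exact Nat.cast_le.mpr hω
  have hmarkov : (j : ℝ≥0∞) * μ E ≤ ∑ i ∈ Finset.Icc 1 m, μ (A i) := by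
    calc (j : ℝ≥0∞) * μ E ≤ (j : ℝ≥0∞) * μ {ω | (j : ℝ≥0∞) ≤ f ω} :=
          mul_le_mul_right (measure_mono fun ω hω => hfF ω (hEF hω)) _
      _ ≤ ∫⁻ ω, f ω ∂μ := mul_meas_ge_le_lintegral₀ hfmeas.aemeasurable _
      _ = _ := hfint
  have hsum_ne_top : (∑ i ∈ Finset.Icc 1 m, μ (A i)) ≠ ⊤ := by
    refine (ENNReal.sum_lt_top.mpr fun i _ => measure_lt_top μ _).ne
  have hkey : (j : ℝ) * (μ E).toReal ≤ ∑ i ∈ Finset.Icc 1 m, p i := by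
    have h2 := ENNReal.toReal_mono hsum_ne_top hmarkov
    rw [ENNReal.toReal_mul, ENNReal.toReal_natCast,
      ENNReal.toReal_sum (fun i _ => (measure_lt_top μ _).ne)] at h2
    calc (j : ℝ) * (μ E).toReal ≤ ∑ i ∈ Finset.Icc 1 m, (μ (A i)).toReal := h2
      _ = ∑ i ∈ Finset.Icc 1 m, p i := by
          refine Finset.sum_congr rfl fun i hi => hPA i ?_
          simp only [Finset.mem_Icc] at hi ⊢
          omega
  have hjr : ((k : ℝ) - rs) = (j : ℝ) := by
    rw [hj, Nat.cast_sub (by omega : rs ≤ k)]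
  refine le_min ?_ ?_
  · rw [hjr, le_div_iff₀ (by exact_mod_cast hj1 : (0 : ℝ) < j)]
    linarith [hkey]
  · have h1 : μ E ≤ 1 := prob_le_one
    calc (μ E).toReal ≤ (1 : ℝ≥0∞).toReal := ENNReal.toReal_mono ENNReal.one_ne_top h1
      _ = 1 := ENNReal.toReal_one
end

section
/- Let $0<p_1<p_2<\cdots<p_n<1$ and $k\in\{1,\dots,n\}$, and let $r^\ast$ be as in the generalized Boole–Fréchet upper bound (the largest $r\in\{1,\dots,k-1\}$ with $p_{n-r+1}\geq\frac{1}{k-r+1}\sum_{i=1}^{n-r+1}p_i$, else $0$). Then there exists a probability space and events $A_1,\dots,A_n$ with $\mathbb{P}(A_i)=p_i$ such that $\mathbb{P}(\text{at least } k \text{ of the } A_i \text{ occur}) = \min\{\frac{1}{k-r^\ast}\sum_{i=1}^{n-r^\ast}p_i,\,1\}$, i.e. the bound is sharp. -/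
open MeasureTheory Finset
open scoped Classical

/-!
Put `m = n - r*`, `κ = k - r*`, `c = (p₁ + ⋯ + pₘ) / κ`, `C = min c 1`, and work on `[0, 1)` with
Lebesgue measure. Lay intervals of lengths `p₁, …, pₘ` end to end on `[0, p₁ + ⋯ + pₘ)`, a segment
of length `κ c ≥ κ C`, and wind it around the circle of circumference `C`, realized as `[0, C)`.
The maximality of `r*` gives `pᵢ ≤ c` for `i ≤ m`, so each wound interval is an arc of measure
`pᵢ`, and every point of `[0, C)` is covered by at least `κ` of them. The other events are
`[0, pᵢ)`, which contain `[0, C)` since `pᵢ ≥ p_{m+1} ≥ c` when `r* > 0`. So each point of `[0, C)`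
lies in at least `κ + r* = k` events and each point outside in at most `r* < k`: the probability
that at least `k` events occur is exactly `C`.
-/

namespace BooleFrechet

/-- The arc `[a, b)` of the circle `ℝ / C ℤ`, realized inside the fundamental domain `[0, C)`. -/
def wrapIco (C a b : ℝ) : Set ℝ :=
  ⋃ j : ℤ, Set.Ico 0 C ∩ (· + j • C) ⁻¹' Set.Ico a b

lemma wrapIco_subset (C a b : ℝ) : wrapIco C a b ⊆ Set.Ico 0 C :=
  Set.iUnion_subset fun _ => Set.inter_subset_left

lemma measurableSet_wrapIco (C a b : ℝ) : MeasurableSet (wrapIco C a b) :=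
  .iUnion fun _ => measurableSet_Ico.inter (measurable_add_const _ measurableSet_Ico)

lemma eq_of_add_zsmul_mem_Ico {C a b x : ℝ} (hC : 0 < C) (hab : b - a ≤ C) {j j' : ℤ}
    (h : x + j • C ∈ Set.Ico a b) (h' : x + j' • C ∈ Set.Ico a b) : j = j' := by
  have hle : ∀ {i i' : ℤ}, x + i • C ∈ Set.Ico a b → x + i' • C ∈ Set.Ico a b → i' ≤ i := by
    intro i i' hi hi'
    rw [zsmul_eq_mul] at hi hi'
    have : (i' : ℝ) * C < (i + 1) * C := by linarith [hi.1, hi'.2]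
    exact Int.lt_add_one_iff.mp (by exact_mod_cast lt_of_mul_lt_mul_right this hC.le)
  exact le_antisymm (hle h' h) (hle h h')

lemma volume_wrapIco {C a b : ℝ} (hC : 0 < C) (hab : b - a ≤ C) :
    volume (wrapIco C a b) = volume (Set.Ico a b) := by
  -- the `j`-th piece of the arc is the translate of the `j`-th tile `[a, b) ∩ [j C, (j + 1) C)`
  have hpiece (j : ℤ) : Set.Ico 0 C ∩ (· + j • C) ⁻¹' Set.Ico a b =
      (· + j • C) ⁻¹' (Set.Ico (j • C) ((j + 1) • C) ∩ Set.Ico a b) := by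
    simp only [Set.preimage_inter, Set.preimage_add_const_Ico, add_smul, one_smul, sub_self,
      add_sub_cancel_left]
  calc volume (wrapIco C a b)
      = ∑' j : ℤ, volume (Set.Ico 0 C ∩ (· + j • C) ⁻¹' Set.Ico a b) :=
        measure_iUnion (fun j j' hjj' => Set.disjoint_left.mpr fun _ hx hx' =>
            hjj' (eq_of_add_zsmul_mem_Ico hC hab hx.2 hx'.2))
          fun _ => measurableSet_Ico.inter (measurable_add_const _ measurableSet_Ico)
    _ = ∑' j : ℤ, volume (Set.Ico (j • C) ((j + 1) • C) ∩ Set.Ico a b) := by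
        simp only [hpiece, measure_preimage_add_right]
    _ = volume (Set.Ico a b) := by
        rw [← measure_iUnion (fun j j' hjj' => (Set.pairwise_disjoint_Ico_zsmul C hjj').mono
            Set.inter_subset_left Set.inter_subset_left)
          fun _ => measurableSet_Ico.inter measurableSet_Ico,
          ← Set.iUnion_inter, iUnion_Ico_zsmul hC, Set.univ_inter]

noncomputable def partialSum (p : ℕ → ℝ) (i : ℕ) : ℝ := ∑ t ∈ Icc 1 i, p t

lemma partialSum_succ (p : ℕ → ℝ) (i : ℕ) :
    partialSum p (i + 1) = partialSum p i + p (i + 1) :=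
  sum_Icc_succ_top (by omega) p

lemma partialSum_sub_pred (p : ℕ → ℝ) {i : ℕ} (hi : 1 ≤ i) :
    partialSum p i - partialSum p (i - 1) = p i := by
  obtain ⟨j, rfl⟩ := Nat.exists_eq_add_of_le' hi
  rw [Nat.add_sub_cancel, partialSum_succ, add_sub_cancel_left]

lemma exists_mem_Ico_partialSum (p : ℕ → ℝ) {M : ℕ} {y : ℝ} (hy : 0 ≤ y)
    (hyM : y < partialSum p M) :
    ∃ i ∈ Icc 1 M, y ∈ Set.Ico (partialSum p (i - 1)) (partialSum p i) := by
  have hex : ∃ i, y < partialSum p i := ⟨M, hyM⟩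
  have hpos : Nat.find hex ≠ 0 := by
    intro h
    have h0 := Nat.find_spec hex
    rw [h] at h0
    simp only [partialSum, zero_lt_one, Icc_eq_empty_of_lt, sum_empty] at h0
    linarith
  refine ⟨Nat.find hex, mem_Icc.mpr ⟨Nat.one_le_iff_ne_zero.mpr hpos, Nat.find_min' hex hyM⟩,
    not_lt.mp (Nat.find_min hex (by omega)), Nat.find_spec hex⟩

def arc (p : ℕ → ℝ) (C : ℝ) (i : ℕ) : Set ℝ :=
  wrapIco C (partialSum p (i - 1)) (partialSum p i)

lemma arc_subset {p : ℕ → ℝ} {C : ℝ} {i : ℕ} : arc p C i ⊆ Set.Ico 0 C :=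
  wrapIco_subset _ _ _

lemma volume_arc {p : ℕ → ℝ} {C : ℝ} {i : ℕ} (hC : 0 < C) (hi : 1 ≤ i) (hpC : p i ≤ C) :
    volume (arc p C i) = ENNReal.ofReal (p i) := by
  rw [arc, volume_wrapIco hC (by rwa [partialSum_sub_pred p hi]), Real.volume_Ico,
    partialSum_sub_pred p hi]

lemma le_card_filter_mem_arc {p : ℕ → ℝ} {C x : ℝ} {M t : ℕ} (hC : 0 < C)
    (hpC : ∀ i ∈ Icc 1 M, p i ≤ C) (hx : x ∈ Set.Ico 0 C) (htM : t * C ≤ partialSum p M) :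
    t ≤ #{i ∈ Icc 1 M | x ∈ arc p C i} := by
  have hblock : ∀ j < t, ∃ i ∈ Icc 1 M,
      x + (j : ℤ) • C ∈ Set.Ico (partialSum p (i - 1)) (partialSum p i) := by
    intro j hj
    have hj' : (j : ℝ) + 1 ≤ t := by exact_mod_cast hj
    rw [natCast_zsmul, nsmul_eq_mul]
    apply exists_mem_Ico_partialSum p (by nlinarith [hx.1])
    nlinarith [hx.2]
  choose! f hfM hf using hblock
  rw [← card_range t]
  refine card_le_card_of_injOn f (fun j hj => ?_) fun j hj j' hj' hjj' => ?_
  · rw [coe_range, Set.mem_Iio] at hj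
    exact mem_filter.mpr ⟨hfM j hj, Set.mem_iUnion.mpr ⟨j, hx, hf j hj⟩⟩
  · rw [coe_range, Set.mem_Iio] at hj hj'
    have hlen := partialSum_sub_pred p (mem_Icc.mp (hfM j hj)).1
    have hj'mem := hf j' hj'
    rw [← hjj'] at hj'mem
    exact_mod_cast eq_of_add_zsmul_mem_Ico hC (hlen ▸ hpC _ (hfM j hj)) (hf j hj) hj'mem

def extremalEvent (p : ℕ → ℝ) (C : ℝ) (m i : ℕ) : Set ℝ :=
  if i ≤ m then arc p C i else Set.Ico 0 (p i)

section ExtremalEvent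

variable {p : ℕ → ℝ} {C : ℝ} {n r k : ℕ}

lemma setOf_le_card_extremalEvent_eq_Ico (hC : 0 < C) (hrn : r ≤ n) (hrk : r < k)
    (hlow : ∀ i ∈ Icc 1 (n - r), p i ≤ C) (hhigh : ∀ i ∈ Ioc (n - r) n, C ≤ p i)
    (hsum : ((k - r : ℕ) : ℝ) * C ≤ partialSum p (n - r)) :
    {ω | k ≤ #{i ∈ Icc 1 n | ω ∈ extremalEvent p C (n - r) i}} = Set.Ico 0 C := by
  ext ω
  constructor
  · intro hk
    by_contra hω
    have hsub : {i ∈ Icc 1 n | ω ∈ extremalEvent p C (n - r) i} ⊆ Ioc (n - r) n := by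
      intro i hi
      rw [mem_filter, mem_Icc] at hi
      rw [mem_Ioc]
      refine ⟨not_le.mp fun him => hω ?_, hi.1.2⟩
      have hi' := hi.2
      rw [extremalEvent, if_pos him] at hi'
      exact arc_subset hi'
    have := (show k ≤ _ from hk).trans (card_le_card hsub)
    rw [Nat.card_Ioc] at this
    omega
  · intro hω
    have hdisj : Disjoint {i ∈ Icc 1 (n - r) | ω ∈ arc p C i} (Ioc (n - r) n) :=
      disjoint_left.mpr fun i hi hi' => by
        rw [mem_filter, mem_Icc] at hi
        rw [mem_Ioc] at hi'
        omega
    have hsub : {i ∈ Icc 1 (n - r) | ω ∈ arc p C i} ∪ Ioc (n - r) n ⊆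
        {i ∈ Icc 1 n | ω ∈ extremalEvent p C (n - r) i} := by
      intro i hi
      rw [mem_union, mem_filter, mem_Icc, mem_Ioc] at hi
      rw [mem_filter, mem_Icc, extremalEvent]
      rcases hi with ⟨⟨hi1, him⟩, hωi⟩ | ⟨hmi, hin⟩
      · exact ⟨⟨hi1, by omega⟩, by rwa [if_pos him]⟩
      · rw [if_neg (by omega)]
        exact ⟨⟨by omega, hin⟩, hω.1, hω.2.trans_le (hhigh i (mem_Ioc.mpr ⟨hmi, hin⟩))⟩
    calc k = (k - r) + (n - (n - r)) := by omega
      _ ≤ #{i ∈ Icc 1 (n - r) | ω ∈ arc p C i} + #(Ioc (n - r) n) := by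
        rw [Nat.card_Ioc]
        exact Nat.add_le_add_right (le_card_filter_mem_arc hC hlow hω hsum) _
      _ = #({i ∈ Icc 1 (n - r) | ω ∈ arc p C i} ∪ Ioc (n - r) n) :=
        (card_union_of_disjoint hdisj).symm
      _ ≤ _ := card_le_card hsub

theorem exists_events_measure_le_card_eq (hC : 0 < C) (hC1 : C ≤ 1) (hrn : r ≤ n) (hrk : r < k)
    (hp0 : ∀ i ∈ Icc 1 n, 0 ≤ p i) (hp1 : ∀ i ∈ Icc 1 n, p i ≤ 1)
    (hlow : ∀ i ∈ Icc 1 (n - r), p i ≤ C) (hhigh : ∀ i ∈ Ioc (n - r) n, C ≤ p i)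
    (hsum : ((k - r : ℕ) : ℝ) * C ≤ partialSum p (n - r)) :
    ∃ A : ℕ → Set ℝ, (∀ i ∈ Icc 1 n, MeasurableSet (A i)) ∧
      (∀ i ∈ Icc 1 n, (volume.restrict (Set.Ico 0 1) (A i)).toReal = p i) ∧
      (volume.restrict (Set.Ico 0 1) {ω | k ≤ #{i ∈ Icc 1 n | ω ∈ A i}}).toReal = C := by
  refine ⟨extremalEvent p C (n - r), fun i _ => ?_, fun i hi => ?_, ?_⟩
  · unfold extremalEvent
    split_ifs
    exacts [measurableSet_wrapIco _ _ _, measurableSet_Ico]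
  · have hi1 := (mem_Icc.mp hi).1
    rw [Measure.restrict_apply' measurableSet_Ico, extremalEvent]
    split_ifs with him
    · have hpC := hlow i (mem_Icc.mpr ⟨hi1, him⟩)
      rw [Set.inter_eq_left.mpr (arc_subset.trans (Set.Ico_subset_Ico_right hC1)),
        volume_arc hC hi1 hpC, ENNReal.toReal_ofReal (hp0 i hi)]
    · rw [Set.inter_eq_left.mpr (Set.Ico_subset_Ico_right (hp1 i hi)), Real.volume_Ico, sub_zero,
        ENNReal.toReal_ofReal (hp0 i hi)]
  · rw [setOf_le_card_extremalEvent_eq_Ico hC hrn hrk hlow hhigh hsum,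
      Measure.restrict_apply' measurableSet_Ico,
      Set.inter_eq_left.mpr (Set.Ico_subset_Ico_right hC1), Real.volume_Ico, sub_zero,
      ENNReal.toReal_ofReal hC.le]

theorem exists_events_measure_le_card_eq_min (hrk : r < k) (hkn : k ≤ n)
    (hp0 : ∀ i ∈ Icc 1 n, 0 < p i) (hp1 : ∀ i ∈ Icc 1 n, p i < 1)
    (hmono : MonotoneOn p (Set.Icc 1 n))
    (hpc : p (n - r) ≤ partialSum p (n - r) / (k - r))
    (hcp : r ≠ 0 → partialSum p (n - r) / (k - r) ≤ p (n - r + 1)) :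
    ∃ A : ℕ → Set ℝ, (∀ i ∈ Icc 1 n, MeasurableSet (A i)) ∧
      (∀ i ∈ Icc 1 n, (volume.restrict (Set.Ico 0 1) (A i)).toReal = p i) ∧
      (volume.restrict (Set.Ico 0 1) {ω | k ≤ #{i ∈ Icc 1 n | ω ∈ A i}}).toReal =
        min (partialSum p (n - r) / (k - r)) 1 := by
  set c := partialSum p (n - r) / (k - r)
  have hκ : (0 : ℝ) < k - r := by rw [sub_pos]; exact_mod_cast hrk
  have hc0 : 0 < c := by
    refine div_pos (sum_pos (fun i hi => hp0 i ?_) ⟨1, mem_Icc.mpr ⟨le_rfl, by omega⟩⟩) hκ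
    have := mem_Icc.mp hi
    exact mem_Icc.mpr ⟨this.1, by omega⟩
  have hlow : ∀ i ∈ Icc 1 (n - r), p i ≤ min c 1 := by
    intro i hi
    have hi' := mem_Icc.mp hi
    refine le_min ((hmono ⟨hi'.1, by omega⟩ ⟨by omega, by omega⟩ hi'.2).trans hpc) ?_
    exact (hp1 i (mem_Icc.mpr ⟨hi'.1, by omega⟩)).le
  have hhigh : ∀ i ∈ Ioc (n - r) n, min c 1 ≤ p i := by
    intro i hi
    have hi' := mem_Ioc.mp hi
    exact (min_le_left c 1).trans ((hcp (by omega)).trans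
      (hmono ⟨by omega, by omega⟩ ⟨by omega, hi'.2⟩ hi'.1))
  have hsum : ((k - r : ℕ) : ℝ) * min c 1 ≤ partialSum p (n - r) := by
    rw [Nat.cast_sub hrk.le]
    calc ((k : ℝ) - r) * min c 1 ≤ (k - r) * c := by gcongr; exact min_le_left c 1
      _ = partialSum p (n - r) := mul_div_cancel₀ _ hκ.ne'
  exact exists_events_measure_le_card_eq (lt_min hc0 one_pos) (min_le_right c 1) (by omega) hrk
    (fun i hi => (hp0 i hi).le) (fun i hi => (hp1 i hi).le) hlow hhigh hsum

end ExtremalEvent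

lemma apply_le_partialSum_div_of_maximal {p : ℕ → ℝ} {n k rs : ℕ} (hrk : rs < k) (hrn : rs < n)
    (hp0 : ∀ i ∈ Icc 1 n, 0 ≤ p i)
    (hmax : ∀ r, 1 ≤ r → r ≤ k - 1 →
      p (n - r + 1) ≥ partialSum p (n - r + 1) / (k - r + 1) → r ≤ rs) :
    p (n - rs) ≤ partialSum p (n - rs) / (k - rs) := by
  rcases (by omega : k = rs + 1 ∨ rs + 2 ≤ k) with rfl | hk
  · have hprev : 0 ≤ partialSum p (n - rs - 1) :=
      sum_nonneg fun i hi => hp0 i (mem_Icc.mpr ((mem_Icc.mp hi).imp_right (by omega)))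
    have := partialSum_sub_pred p (by omega : 1 ≤ n - rs)
    push_cast
    rw [add_sub_cancel_left, div_one]
    linarith
  · -- otherwise `rs + 1` would satisfy the defining inequality as well
    by_contra h
    have hr := hmax (rs + 1) (by omega) (by omega) (by
      rw [(by omega : n - (rs + 1) + 1 = n - rs)]
      rw [ge_iff_le, show (k : ℝ) - (rs + 1 : ℕ) + 1 = k - rs by push_cast; ring]
      exact (not_le.mp h).le)
    omega

lemma partialSum_div_le_of_le_partialSum_succ_div {p : ℕ → ℝ} {m : ℕ} {κ : ℝ} (hκ : 0 < κ)
    (h : p (m + 1) ≥ partialSum p (m + 1) / (κ + 1)) : partialSum p m / κ ≤ p (m + 1) := by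
  rw [ge_iff_le, div_le_iff₀ (by linarith), partialSum_succ] at h
  rw [div_le_iff₀ hκ]
  linarith

end BooleFrechet

open BooleFrechet in
theorem stmt_3
    (n : ℕ) (p : ℕ → ℝ)
    (hp0 : ∀ i ∈ Finset.Icc 1 n, 0 < p i) (hp1 : ∀ i ∈ Finset.Icc 1 n, p i < 1)
    (hmono : ∀ i, 1 ≤ i → i < n → p i < p (i + 1))
    (k : ℕ) (hk1 : 1 ≤ k) (hkn : k ≤ n)
    (rs : ℕ)
    (hrs : rs = 0 ∨ (1 ≤ rs ∧ rs ≤ k - 1 ∧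
      p (n - rs + 1) ≥ (∑ i ∈ Finset.Icc 1 (n - rs + 1), p i) / (k - rs + 1)))
    (hrsmax : ∀ r, 1 ≤ r → r ≤ k - 1 →
      p (n - r + 1) ≥ (∑ i ∈ Finset.Icc 1 (n - r + 1), p i) / (k - r + 1) → r ≤ rs) :
    ∃ (Ω : Type) (_ : MeasurableSpace Ω) (μ : Measure Ω) (_ : IsProbabilityMeasure μ)
      (A : ℕ → Set Ω),
      (∀ i ∈ Finset.Icc 1 n, MeasurableSet (A i)) ∧
      (∀ i ∈ Finset.Icc 1 n, (μ (A i)).toReal = p i) ∧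
      (μ {ω | k ≤ ((Finset.Icc 1 n).filter (fun i => ω ∈ A i)).card}).toReal =
        min ((∑ i ∈ Finset.Icc 1 (n - rs), p i) / (k - rs)) 1 := by
  have hrk : rs < k := by rcases hrs with h | ⟨-, h, -⟩ <;> omega
  have hκ : (0 : ℝ) < k - rs := by rw [sub_pos]; exact_mod_cast hrk
  have hcp : rs ≠ 0 → partialSum p (n - rs) / (k - rs) ≤ p (n - rs + 1) := by
    rcases hrs with h | ⟨-, -, h⟩
    · exact absurd h
    · exact fun _ => partialSum_div_le_of_le_partialSum_succ_div hκ h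
  obtain ⟨A, hAmeas, hAprob, hAcount⟩ := exists_events_measure_le_card_eq_min hrk hkn hp0 hp1
    (monotoneOn_of_le_add_one Set.ordConnected_Icc fun i _ hi hi' =>
      (hmono i hi.1 (by have := hi'.2; omega)).le)
    (apply_le_partialSum_div_of_maximal hrk (by omega) (fun i hi => (hp0 i hi).le) hrsmax) hcp
  exact ⟨ℝ, _, volume.restrict (Set.Ico 0 1), ⟨by simp⟩, A, hAmeas, hAprob, hAcount⟩
end

section
/- Let $0<p_1\le\cdots\le p_n<1$ and $k\in\{0,\dots,n-1\}$. Define $r^\ast$ as the largest $r\in\{1,\dots,k\}$ with $p_{n-r+1}\geq \frac{1}{k-r+2}\sum_{i=1}^{n-r+1}p_i$, or $0$ if none exists. Then for any events $A_1,\dots,A_n$ with $\mathbb{P}(A_i)=p_i$, $\mathbb{P}(\text{at most } k \text{ of the } A_i \text{ occur}) \geq \max\{1-\frac{1}{k+1-r^\ast}\sum_{i=1}^{n-r^\ast}p_i,\,0\}$. -/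
open MeasureTheory Finset
open scoped Classical ENNReal

theorem stmt_4 {Ω : Type*} [MeasurableSpace Ω] (μ : Measure Ω) [IsProbabilityMeasure μ]
    (n : ℕ) (p : ℕ → ℝ)
    (hp0 : ∀ i ∈ Finset.Icc 1 n, 0 < p i) (hp1 : ∀ i ∈ Finset.Icc 1 n, p i < 1)
    (hmono : ∀ i, 1 ≤ i → i < n → p i ≤ p (i + 1))
    (k : ℕ) (hkn : k ≤ n - 1)
    (rs : ℕ)
    (hrs : rs = 0 ∨ (1 ≤ rs ∧ rs ≤ k ∧
      p (n - rs + 1) ≥ (∑ i ∈ Finset.Icc 1 (n - rs + 1), p i) / (k - rs + 2)))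
    (hrsmax : ∀ r, 1 ≤ r → r ≤ k →
      p (n - r + 1) ≥ (∑ i ∈ Finset.Icc 1 (n - r + 1), p i) / (k - r + 2) → r ≤ rs)
    (A : ℕ → Set Ω) (hA : ∀ i ∈ Finset.Icc 1 n, MeasurableSet (A i))
    (hPA : ∀ i ∈ Finset.Icc 1 n, (μ (A i)).toReal = p i) :
    (μ {ω | ((Finset.Icc 1 n).filter (fun i => ω ∈ A i)).card ≤ k}).toReal ≥
      max (1 - (∑ i ∈ Finset.Icc 1 (n - rs), p i) / (k + 1 - rs)) 0 := by
  have hrk : rs ≤ k := by rcases hrs with h | ⟨_, h, _⟩ <;> omega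
  set m := n - rs with hm
  have hmn : m ≤ n := Nat.sub_le _ _
  set c := k + 1 - rs with hc
  have hc1 : 1 ≤ c := by omega
  have hmem : ∀ i ∈ Finset.Icc 1 m, i ∈ Finset.Icc 1 n := by
    intro i hi; simp only [Finset.mem_Icc] at *; omega
  set f : Ω → ℝ≥0∞ := fun ω => ∑ i ∈ Finset.Icc 1 m, (A i).indicator (fun _ => (1:ℝ≥0∞)) ω
    with hf
  have hfmeas : Measurable f := Finset.measurable_sum _ fun i hi =>
    Measurable.indicator measurable_const (hA i (hmem i hi))
  have hfcard : ∀ ω, f ω = (((Finset.Icc 1 m).filter (fun i => ω ∈ A i)).card : ℝ≥0∞) := by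
    intro ω
    rw [hf, Finset.card_filter, Nat.cast_sum]
    refine Finset.sum_congr rfl fun i hi => ?_
    by_cases h : ω ∈ A i <;> simp [Set.indicator_apply, h]
  have hint : ∫⁻ ω, f ω ∂μ = ∑ i ∈ Finset.Icc 1 m, μ (A i) := by
    rw [hf, lintegral_finset_sum _ fun i hi =>
      (measurable_const.indicator (hA i (hmem i hi)))]
    refine Finset.sum_congr rfl fun i hi => ?_
    rw [lintegral_indicator_const (hA i (hmem i hi)), one_mul]
  have hmarkov : (c : ℝ≥0∞) * μ {ω | (c:ℝ≥0∞) ≤ f ω} ≤ ∑ i ∈ Finset.Icc 1 m, μ (A i) := by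
    rw [← hint]
    exact mul_meas_ge_le_lintegral₀ hfmeas.aemeasurable _
  set T : Set Ω := {ω | ((Finset.Icc 1 n).filter (fun i => ω ∈ A i)).card ≤ k} with hT
  have hincl : Tᶜ ⊆ {ω | (c:ℝ≥0∞) ≤ f ω} := by
    intro ω hω
    simp only [Set.mem_compl_iff, Set.mem_setOf_eq, not_le, hT] at hω
    have hsplit : (Finset.Icc 1 n).filter (fun i => ω ∈ A i) ⊆
        ((Finset.Icc 1 m).filter (fun i => ω ∈ A i)) ∪ Finset.Icc (m+1) n := by
      intro i hi
      simp only [Finset.mem_filter, Finset.mem_Icc] at hi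
      by_cases h : i ≤ m
      · exact Finset.mem_union_left _ (Finset.mem_filter.2
          ⟨Finset.mem_Icc.2 ⟨hi.1.1, h⟩, hi.2⟩)
      · exact Finset.mem_union_right _ (Finset.mem_Icc.2 ⟨by omega, hi.1.2⟩)
    have hcard := (Finset.card_le_card hsplit).trans (Finset.card_union_le _ _)
    have hIcc : (Finset.Icc (m+1) n).card = n - m := by
      rw [Nat.card_Icc]; omega
    have hnm : n - m ≤ rs := by omega
    have hkey : c ≤ ((Finset.Icc 1 m).filter (fun i => ω ∈ A i)).card := by omega
    simp only [Set.mem_setOf_eq, hfcard ω]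
    exact_mod_cast hkey
  -- pass to reals
  have hfin : ∀ s : Set Ω, μ s ≠ ⊤ := fun s => measure_ne_top μ s
  have hS : (∑ i ∈ Finset.Icc 1 m, μ (A i)).toReal = ∑ i ∈ Finset.Icc 1 m, p i := by
    rw [ENNReal.toReal_sum fun i hi => hfin _]
    exact Finset.sum_congr rfl fun i hi => hPA i (hmem i hi)
  set S : ℝ := ∑ i ∈ Finset.Icc 1 m, p i with hSdef
  have hcpos : (0:ℝ) < c := by exact_mod_cast hc1
  have hbad : (μ {ω | (c:ℝ≥0∞) ≤ f ω}).toReal ≤ S / c := by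
    rw [le_div_iff₀ hcpos]
    have := ENNReal.toReal_mono (by simp [hfin]) hmarkov
    rw [ENNReal.toReal_mul, ENNReal.toReal_natCast, hS] at this
    linarith [this]
  have hcompl : (μ Tᶜ).toReal ≤ S / c :=
    le_trans (ENNReal.toReal_mono (hfin _) (measure_mono hincl)) hbad
  have hone : 1 ≤ (μ T).toReal + (μ Tᶜ).toReal := by
    have h1 : μ Set.univ ≤ μ T + μ Tᶜ := by
      rw [← Set.union_compl_self T]; exact measure_union_le _ _
    have h2 := ENNReal.toReal_mono (by simp [ENNReal.add_ne_top, hfin]) h1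
    rw [measure_univ, ENNReal.toReal_one, ENNReal.toReal_add (hfin _) (hfin _)] at h2
    exact h2
  have hcast : ((k:ℝ) + 1 - rs) = (c:ℝ) := by
    rw [hc, Nat.cast_sub (by omega)]; push_cast; ring
  rw [ge_iff_le]
  apply max_le
  · rw [hcast]
    have : S / (c:ℝ) = (∑ i ∈ Finset.Icc 1 m, p i) / c := rfl
    linarith [hcompl, hone]
  · exact ENNReal.toReal_nonneg
end

section
/- Let $0<p_1\le\cdots\le p_n<1$ and $k\in\{1,\dots,n\}$. Define $r^\ast$ as the largest $r\in\{1,\dots,n-k\}$ with $(1-p_r)\geq\frac{1}{n-k-r+2}\sum_{i=r}^{n}(1-p_i)$, or $0$ if none exists. Then for any events $A_1,\dots,A_n$ with $\mathbb{P}(A_i)=p_i$, $\mathbb{P}(\text{at least } k \text{ of the } A_i \text{ occur}) \geq \max\{1-\sum_{i=r^\ast+1}^{n}\frac{1-p_i}{n-k+1-r^\ast},\,0\}$. -/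
open MeasureTheory Finset
open scoped Classical
open scoped ENNReal

/-
If fewer than `k` of the events `A_{r+1}, …, A_n` occur, then at least `n - r + 1 - k` of their
complements occur. Markov's inequality for the number of occurring complements therefore gives
`(n - k + 1 - r) · ℙ(fewer than k of A_{r+1}, …, A_n occur) ≤ ∑_{i > r} (1 - p_i)`, and at least `k`
of all the events occur as soon as at least `k` of `A_{r+1}, …, A_n` do.
-/

lemma natCast_mul_measure_le_sum_measure {Ω ι : Type*} [MeasurableSpace Ω] (μ : Measure Ω)
    {t : Finset ι} {B : ι → Set Ω} (hB : ∀ i ∈ t, MeasurableSet (B i)) {E : Set Ω} {m : ℕ}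
    (hE : ∀ ω ∈ E, m ≤ #(t.filter fun i => ω ∈ B i)) :
    (m : ℝ≥0∞) * μ E ≤ ∑ i ∈ t, μ (B i) := by
  set count : Ω → ℝ≥0∞ := fun ω => ∑ i ∈ t, (B i).indicator 1 ω
  have hcount : ∀ ω, count ω = #(t.filter fun i => ω ∈ B i) := by
    intro ω
    simp only [count, card_filter, Nat.cast_sum, Set.indicator_apply]
    exact sum_congr rfl fun i _ => by split_ifs <;> simp
  have hmeas : Measurable count :=
    Finset.measurable_sum _ fun i hi => measurable_one.indicator (hB i hi)
  calc (m : ℝ≥0∞) * μ E ≤ m * μ {ω | (m : ℝ≥0∞) ≤ count ω} := by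
        gcongr
        intro ω hω
        simpa [hcount] using hE ω hω
    _ ≤ ∫⁻ ω, count ω ∂μ := mul_meas_ge_le_lintegral₀ hmeas.aemeasurable _
    _ = ∑ i ∈ t, μ (B i) := by
        rw [lintegral_finsetSum t fun i hi => measurable_one.indicator (hB i hi)]
        exact sum_congr rfl fun i hi => lintegral_indicator_one (hB i hi)

lemma one_sub_measureReal_le_measureReal_compl {Ω : Type*} [MeasurableSpace Ω] (μ : Measure Ω)
    [IsProbabilityMeasure μ] (S : Set Ω) : 1 - μ.real S ≤ μ.real Sᶜ := by
  have := measureReal_union_le (μ := μ) S Sᶜ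
  rw [Set.union_compl_self, probReal_univ] at this
  linarith

theorem natCast_mul_one_sub_probReal_le {Ω ι : Type*} [MeasurableSpace Ω] (μ : Measure Ω)
    [IsProbabilityMeasure μ] {t : Finset ι} {A : ι → Set Ω}
    (hA : ∀ i ∈ t, MeasurableSet (A i)) (k : ℕ) :
    ((#t + 1 - k : ℕ) : ℝ) * (1 - μ.real {ω | k ≤ #(t.filter fun i => ω ∈ A i)}) ≤
      ∑ i ∈ t, (1 - μ.real (A i)) := by
  set S := {ω | k ≤ #(t.filter fun i => ω ∈ A i)}
  have hmarkov : ((#t + 1 - k : ℕ) : ℝ≥0∞) * μ Sᶜ ≤ ∑ i ∈ t, μ (A i)ᶜ := by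
    refine natCast_mul_measure_le_sum_measure μ (fun i hi => (hA i hi).compl) fun ω hω => ?_
    have hfew : #(t.filter fun i => ω ∈ A i) < k := not_le.mp hω
    have hsplit := card_filter_add_card_filter_not (s := t) fun i => ω ∈ A i
    simp only [Set.mem_compl_iff]
    omega
  have hreal := ENNReal.toReal_mono
    (ENNReal.sum_ne_top.mpr fun i _ => measure_ne_top μ _) hmarkov
  rw [ENNReal.toReal_mul, ENNReal.toReal_natCast,
    ENNReal.toReal_sum fun i _ => measure_ne_top μ _] at hreal
  calc _ ≤ ((#t + 1 - k : ℕ) : ℝ) * μ.real Sᶜ := by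
        gcongr
        exact one_sub_measureReal_le_measureReal_compl μ S
    _ ≤ ∑ i ∈ t, μ.real (A i)ᶜ := hreal
    _ = ∑ i ∈ t, (1 - μ.real (A i)) :=
        sum_congr rfl fun i hi => probReal_compl_eq_one_sub (hA i hi)

theorem stmt_5_general {Ω : Type*} [MeasurableSpace Ω] (μ : Measure Ω) [IsProbabilityMeasure μ]
    (n : ℕ) (p : ℕ → ℝ)
    (k : ℕ) (hkn : k ≤ n)
    (rs : ℕ)
    (hrs : rs = 0 ∨ (1 ≤ rs ∧ rs ≤ n - k ∧
      1 - p rs ≥ (∑ i ∈ Finset.Icc rs n, (1 - p i)) / (n - k - rs + 2)))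
    (A : ℕ → Set Ω) (hA : ∀ i ∈ Finset.Icc 1 n, MeasurableSet (A i))
    (hPA : ∀ i ∈ Finset.Icc 1 n, (μ (A i)).toReal = p i) :
    (μ {ω | k ≤ ((Finset.Icc 1 n).filter (fun i => ω ∈ A i)).card}).toReal ≥
      max (1 - (∑ i ∈ Finset.Icc (rs + 1) n, (1 - p i)) / (n - k + 1 - rs)) 0 := by
  have hrsnk : rs + k ≤ n := by rcases hrs with h | h <;> omega
  have htail : Icc (rs + 1) n ⊆ Icc 1 n := Icc_subset_Icc_left (by omega)
  have hbound := natCast_mul_one_sub_probReal_le μ (fun i hi => hA i (htail hi)) k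
  have hmono : μ.real {ω | k ≤ #((Icc (rs + 1) n).filter fun i => ω ∈ A i)} ≤
      μ.real {ω | k ≤ #((Icc 1 n).filter fun i => ω ∈ A i)} :=
    measureReal_mono fun ω hω => hω.trans (card_le_card (filter_subset_filter _ htail))
  have hm : #(Icc (rs + 1) n) + 1 - k = n - k + 1 - rs := by simp only [Nat.card_Icc]; omega
  have hprob : ∑ i ∈ Icc (rs + 1) n, (1 - μ.real (A i)) = ∑ i ∈ Icc (rs + 1) n, (1 - p i) :=
    sum_congr rfl fun i hi => by rw [measureReal_def, hPA i (htail hi)]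
  rw [hm, hprob, Nat.cast_sub (by omega), Nat.cast_add, Nat.cast_sub hkn, Nat.cast_one] at hbound
  have hmpos : (0 : ℝ) < n - k + 1 - rs := by
    have : (rs : ℝ) + k ≤ n := by exact_mod_cast hrsnk
    linarith
  refine max_le ?_ ENNReal.toReal_nonneg
  rw [← measureReal_def, sub_le_comm, le_div_iff₀ hmpos]
  linarith [mul_le_mul_of_nonneg_left hmono hmpos.le]

theorem stmt_5 {Ω : Type*} [MeasurableSpace Ω] (μ : Measure Ω) [IsProbabilityMeasure μ]
    (n : ℕ) (p : ℕ → ℝ)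
    (hp0 : ∀ i ∈ Finset.Icc 1 n, 0 < p i) (hp1 : ∀ i ∈ Finset.Icc 1 n, p i < 1)
    (hmono : ∀ i, 1 ≤ i → i < n → p i ≤ p (i + 1))
    (k : ℕ) (hk1 : 1 ≤ k) (hkn : k ≤ n)
    (rs : ℕ)
    (hrs : rs = 0 ∨ (1 ≤ rs ∧ rs ≤ n - k ∧
      1 - p rs ≥ (∑ i ∈ Finset.Icc rs n, (1 - p i)) / (n - k - rs + 2)))
    (hrsmax : ∀ r, 1 ≤ r → r ≤ n - k →
      1 - p r ≥ (∑ i ∈ Finset.Icc r n, (1 - p i)) / (n - k - r + 2) → r ≤ rs)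
    (A : ℕ → Set Ω) (hA : ∀ i ∈ Finset.Icc 1 n, MeasurableSet (A i))
    (hPA : ∀ i ∈ Finset.Icc 1 n, (μ (A i)).toReal = p i) :
    (μ {ω | k ≤ ((Finset.Icc 1 n).filter (fun i => ω ∈ A i)).card}).toReal ≥
      max (1 - (∑ i ∈ Finset.Icc (rs + 1) n, (1 - p i)) / (n - k + 1 - rs)) 0 :=
  stmt_5_general μ n p k hkn rs hrs A hA hPA
end

section
/- Let $0<p_1\le\cdots\le p_n<1$, $k\in\{2,\dots,n\}$, and $r\in\{2,\dots,k-1\}$. If $p_{n-r+1}\geq\frac{1}{k-r+1}\sum_{i=1}^{n-r+1}p_i$, then $p_{n-r+2}\geq\frac{1}{k-r+2}\sum_{i=1}^{n-r+2}p_i$. Equivalently: the set of $r\in\{1,\dots,k-1\}$ satisfying the inequality $p_{n-r+1}\geq\frac{1}{k-r+1}\sum_{i=1}^{n-r+1}p_i$ is downward closed (if $r>1$ satisfies it, so does $r-1$). -/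
open Finset

theorem stmt_9
    (n : ℕ) (p : ℕ → ℝ)
    (hp0 : ∀ i ∈ Finset.Icc 1 n, 0 < p i) (hp1 : ∀ i ∈ Finset.Icc 1 n, p i < 1)
    (hmono : ∀ i, 1 ≤ i → i < n → p i ≤ p (i + 1))
    (k : ℕ) (hk2 : 2 ≤ k) (hkn : k ≤ n)
    (r : ℕ) (hr2 : 2 ≤ r) (hrk : r ≤ k - 1)
    (h : p (n - r + 1) ≥ (∑ i ∈ Finset.Icc 1 (n - r + 1), p i) / (k - r + 1)) :
    p (n - (r - 1) + 1) ≥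
      (∑ i ∈ Finset.Icc 1 (n - (r - 1) + 1), p i) / (k - (r - 1) + 1) := by
  have hrn : r ≤ n := by omega
  have hidx : n - (r - 1) + 1 = (n - r + 1) + 1 := by omega
  set m := n - r + 1 with hmdef
  have hm1 : 1 ≤ m := by omega
  have hmn : m < n := by omega
  have hmono' : p m ≤ p (m + 1) := hmono m hm1 hmn
  have hc : (1:ℝ) ≤ (k:ℝ) - r := by
    have h1 : (r:ℝ) + 1 ≤ (k:ℝ) := by exact_mod_cast (by omega : r + 1 ≤ k)
    linarith
  have hpm : 0 < p m := hp0 m (by simp [Finset.mem_Icc]; omega)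
  rw [hidx]
  have hsum : ∑ i ∈ Finset.Icc 1 (m+1), p i = (∑ i ∈ Finset.Icc 1 m, p i) + p (m+1) :=
    Finset.sum_Icc_succ_top (by omega) p
  rw [hsum]
  have hden : (k:ℝ) - ((r:ℝ) - 1) + 1 = ((k:ℝ) - r + 1) + 1 := by ring
  rw [hden]
  rw [ge_iff_le, div_le_iff₀ (by linarith)] at h ⊢
  nlinarith [mul_le_mul_of_nonneg_right hmono' (by linarith : (0:ℝ) ≤ (k:ℝ) - r + 1)]
end

section
/- Let $n\geq1$, $k\in\{1,\dots,n\}$ and $0<p_1\le\cdots\le p_n<1$. If $p_n\geq\frac{1}{k}\sum_{i=1}^{n}p_i$ and $k\geq2$, then the sharp upper bound for $\mathbb{P}(\text{at least } k \text{ of } n)$ is at most $\frac{1}{k-1}\sum_{i=1}^{n-1}p_i$: i.e., for all events $A_1,\dots,A_n$ with these marginals, $\mathbb{P}(\sum_i\mathbf{1}_{A_i}\geq k)\leq\frac{1}{k-1}\sum_{i=1}^{n-1}p_i$. -/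
open MeasureTheory Finset
open scoped Classical

theorem stmt_15 {Ω : Type*} [MeasurableSpace Ω] (μ : Measure Ω) [IsProbabilityMeasure μ]
    (n : ℕ) (hn : 1 ≤ n) (p : ℕ → ℝ)
    (hp0 : ∀ i ∈ Finset.Icc 1 n, 0 < p i) (hp1 : ∀ i ∈ Finset.Icc 1 n, p i < 1)
    (hmono : ∀ i, 1 ≤ i → i < n → p i ≤ p (i + 1))
    (k : ℕ) (hk2 : 2 ≤ k) (hkn : k ≤ n)
    (hdom : p n ≥ (∑ i ∈ Finset.Icc 1 n, p i) / k)
    (A : ℕ → Set Ω) (hA : ∀ i ∈ Finset.Icc 1 n, MeasurableSet (A i))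
    (hPA : ∀ i ∈ Finset.Icc 1 n, (μ (A i)).toReal = p i) :
    (μ {ω | k ≤ ((Finset.Icc 1 n).filter (fun i => ω ∈ A i)).card}).toReal ≤
      (∑ i ∈ Finset.Icc 1 (n - 1), p i) / (k - 1) := by
  set S := Finset.Icc 1 (n - 1) with hS
  have hSsub : S ⊆ Finset.Icc 1 n := Finset.Icc_subset_Icc_right (Nat.sub_le n 1)
  set f : Ω → ENNReal := fun ω => ∑ i ∈ S, (A i).indicator 1 ω with hf
  have hmeas : ∀ i ∈ S, Measurable fun ω => (A i).indicator (1 : Ω → ENNReal) ω := by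
    intro i hi
    exact measurable_one.indicator (hA i (hSsub hi))
  have hfint : ∫⁻ ω, f ω ∂μ = ∑ i ∈ S, μ (A i) := by
    rw [lintegral_finset_sum _ hmeas]
    refine Finset.sum_congr rfl fun i hi => ?_
    exact lintegral_indicator_one (hA i (hSsub hi))
  have hfmeas : Measurable f := Finset.measurable_sum _ hmeas
  have hfcard : ∀ ω, f ω = ((S.filter (fun i => ω ∈ A i)).card : ENNReal) := by
    intro ω
    simp only [hf, Set.indicator_apply, Pi.one_apply]
    rw [Finset.sum_boole]
  have hsubset : {ω | k ≤ ((Finset.Icc 1 n).filter (fun i => ω ∈ A i)).card} ⊆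
      {ω | ((k - 1 : ℕ) : ENNReal) ≤ f ω} := by
    intro ω hω
    simp only [Set.mem_setOf_eq] at hω ⊢
    have hins : Finset.Icc 1 n = insert n S := by
      rw [hS]
      ext x
      simp only [Finset.mem_Icc, Finset.mem_insert]
      omega
    have hcardle : ((Finset.Icc 1 n).filter (fun i => ω ∈ A i)).card ≤
        (S.filter (fun i => ω ∈ A i)).card + 1 := by
      rw [hins]
      rcases Classical.em (ω ∈ A n) with h | h
      · rw [Finset.filter_insert, if_pos h]
        exact (Finset.card_insert_le _ _).trans (by omega)
      · rw [Finset.filter_insert, if_neg h]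
        omega
    rw [hfcard ω]
    exact_mod_cast Nat.le_of_add_le_add_right (by omega : k - 1 + 1 ≤ (S.filter (fun i => ω ∈ A i)).card + 1)
  have hmarkov := mul_meas_ge_le_lintegral₀ (μ := μ) hfmeas.aemeasurable ((k - 1 : ℕ) : ENNReal)
  rw [hfint] at hmarkov
  have hmono' : ((k - 1 : ℕ) : ENNReal) * μ {ω | k ≤ ((Finset.Icc 1 n).filter (fun i => ω ∈ A i)).card}
      ≤ ∑ i ∈ S, μ (A i) :=
    le_trans (mul_le_mul_right (measure_mono hsubset) _) hmarkov
  have hfin : (∑ i ∈ S, μ (A i)) ≠ ⊤ :=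
    (ENNReal.sum_lt_top.mpr fun i _ => measure_lt_top μ _).ne
  have hreal : ((k - 1 : ℕ) : ℝ) * (μ {ω | k ≤ ((Finset.Icc 1 n).filter (fun i => ω ∈ A i)).card}).toReal
      ≤ ∑ i ∈ S, p i := by
    have := ENNReal.toReal_mono hfin hmono'
    rw [ENNReal.toReal_mul, ENNReal.toReal_sum (fun i _ => measure_ne_top μ _)] at this
    simp only [ENNReal.toReal_natCast] at this
    calc ((k - 1 : ℕ) : ℝ) * _ ≤ ∑ i ∈ S, (μ (A i)).toReal := this
      _ = ∑ i ∈ S, p i := Finset.sum_congr rfl fun i hi => hPA i (hSsub hi)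
  have hkpos : (0 : ℝ) < (k : ℝ) - 1 := by
    have : (2 : ℝ) ≤ (k : ℝ) := by exact_mod_cast hk2
    linarith
  rw [le_div_iff₀ hkpos]
  have : ((k - 1 : ℕ) : ℝ) = (k : ℝ) - 1 := by
    have : 1 ≤ k := by omega
    push_cast [this]
    ring
  rw [← this]
  linarith [hreal]
end
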